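/- arXiv:2602.23107 — 7 statements merged into one kernel-verified Lean document; each statement's English description precedes it below -/
import Mathlib

section
/- Let G be an LCA group and let G₀ be the connected component of the identity in G. Then the annihilator of G₀ in the Pontryagin dual of G equals the set of compact elements of the Pontryagin dual; that is, a continuous character χ : G → 𝕊¹ vanishes on G₀ if and only if the closure in the dual group of the cyclic subgroup generated by χ is compact. -/
/-!
A character `χ` killing `G₀` factors through `G ⧸ G₀`, a totally disconnected locally compact
group; by van Dantzig's argument the latter has an open subgroup that `χ` maps into the right
half-circle, and since the circle has no small subgroups, `χ` kills an open subgroup `H` of `G`.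
Then `χ` lies in the dual of the discrete group `G ⧸ H`, a compact subgroup of the dual of `G`.
Conversely, if the closure of the powers of `χ` is compact, the tube lemma yields a neighbourhood
of `1` that every power of `χ` maps into the right half-circle; so `ker χ` is open, hence clopen,
and contains `G₀`.
-/

open Filter Topology

theorem totallyDisconnectedSpace_quotient_connectedComponentOfOne (G : Type*) [CommGroup G]
    [TopologicalSpace G] [IsTopologicalGroup G] :
    TotallyDisconnectedSpace (G ⧸ Subgroup.connectedComponentOfOne G) := by
  set N := Subgroup.connectedComponentOfOne G
  have hfiber (q : G ⧸ N) : IsConnected ((↑) ⁻¹' {q} : Set G) := by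
    obtain ⟨g, rfl⟩ := QuotientGroup.mk_surjective q
    have hcoset : ((↑) ⁻¹' {(g : G ⧸ N)} : Set G) = connectedComponent g := by
      rw [← mul_one g, ← smul_connectedComponent, mul_one]
      exact QuotientGroup.eq_class_eq_leftCoset N g
    exact hcoset ▸ isConnected_connectedComponent
  rw [totallyDisconnectedSpace_iff_connectedComponent_one, ← QuotientGroup.mk_one,
    ← (QuotientGroup.isQuotientMap_mk N).isCoinducing.image_connectedComponent hfiber]
  refine Set.eq_singleton_iff_unique_mem.2 ⟨⟨1, mem_connectedComponent, rfl⟩, ?_⟩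
  rintro _ ⟨g, hg, rfl⟩
  exact (QuotientGroup.eq_one_iff g).2 hg

theorem exists_openSubgroup_subset_of_mem_nhds_one {G : Type*} [Group G] [TopologicalSpace G]
    [IsTopologicalGroup G] [LocallyCompactSpace G] [T2Space G] [TotallyDisconnectedSpace G]
    {U : Set G} (hU : U ∈ 𝓝 1) : ∃ H : OpenSubgroup G, (H : Set G) ⊆ U := by
  obtain ⟨K, hK, hKU, hKc⟩ := local_compact_nhds hU
  obtain ⟨C, hC, h1C, hCint⟩ := loc_compact_Haus_tot_disc_of_zero_dim.mem_nhds_iff.1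
    (interior_mem_nhds.2 hK)
  have hCK : C ⊆ K := hCint.trans interior_subset
  obtain ⟨V, hV, hCV⟩ := compact_open_separated_mul_right
    (hKc.of_isClosed_subset hC.1 hCK) hC.2 subset_rfl
  -- `C` is stable under right multiplication by the symmetric neighbourhood `V ∩ V⁻¹`,
  -- hence by the subgroup it generates; evaluating at `1 ∈ C` puts that subgroup inside `C`.
  set H := Subgroup.closure (V ∩ V⁻¹)
  have hCH : ∀ h ∈ H, ∀ c ∈ C, c * h ∈ C := by
    intro h hh
    induction hh using Subgroup.closure_induction'' with
    | mem x hx => exact fun c hc ↦ hCV (Set.mul_mem_mul hc hx.1)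
    | inv_mem x hx => exact fun c hc ↦ hCV (Set.mul_mem_mul hc hx.2)
    | one => exact fun c hc ↦ by rwa [mul_one]
    | mul x y _ _ hx hy => exact fun c hc ↦ mul_assoc c x y ▸ hy _ (hx c hc)
  refine ⟨⟨H, H.isOpen_of_mem_nhds (mem_of_superset (inter_mem hV (inv_mem_nhds_one G hV))
    Subgroup.subset_closure)⟩, fun h hh ↦ hKU (hCK ?_)⟩
  exact one_mul h ▸ hCH h hh 1 h1C

theorem isCompact_closure_zpowers_of_mem {X : Type*} [Group X] [TopologicalSpace X] [T2Space X]
    {K : Subgroup X} (hK : IsCompact (K : Set X)) {x : X} (hx : x ∈ K) :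
    IsCompact (closure (Subgroup.zpowers x : Set X)) :=
  hK.of_isClosed_subset isClosed_closure (closure_minimal (Subgroup.zpowers_le.2 hx) hK.isClosed)

open Real Circle in
theorem Circle.centeredArc_pi_div_two_mem_nhds : centeredArc (π / 2) ∈ 𝓝 (1 : Circle) := by
  simpa using hasBasis_centeredArc_div_two_pow.mem_of_mem (i := 0) trivial

namespace PontryaginDual

open Real Circle

instance {G : Type*} [CommGroup G] [TopologicalSpace G] [LocallyCompactSpace G] :
    ContinuousEval (PontryaginDual G) G Circle :=
  ContinuousMonoidHom.instContinuousEval G Circle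

variable {G : Type*} [CommGroup G] [TopologicalSpace G] [IsTopologicalGroup G]

theorem exists_openSubgroup_forall_eq_one_of_forall_connectedComponent [LocallyCompactSpace G]
    {χ : PontryaginDual G} (hχ : ∀ g ∈ connectedComponent (1 : G), χ g = 1) :
    ∃ H : OpenSubgroup G, ∀ h ∈ H, χ h = 1 := by
  set N := Subgroup.connectedComponentOfOne G
  have : IsClosed (N : Set G) := isClosed_connectedComponent
  have := totallyDisconnectedSpace_quotient_connectedComponentOfOne G
  set χN : G ⧸ N →* Circle := QuotientGroup.lift N (χ : G →* Circle) hχ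
  have hχN : Continuous χN :=
    (QuotientGroup.isQuotientMap_mk N).continuous_iff.2 (map_continuous χ)
  obtain ⟨W, hW⟩ := exists_openSubgroup_subset_of_mem_nhds_one
    (hχN.continuousAt.preimage_mem_nhds (_root_.map_one χN ▸ centeredArc_pi_div_two_mem_nhds))
  refine ⟨W.comap (QuotientGroup.mk' N) QuotientGroup.continuous_mk, fun h hh ↦ ?_⟩
  refine eq_one_of_forall_pow_mem_centeredArc_pi_div_two fun n _ ↦ ?_
  exact map_pow χ h n ▸ hW (pow_mem hh n)

theorem isCompact_closure_zpowers_of_forall_eq_one {χ : PontryaginDual G} (H : OpenSubgroup G)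
    (hχ : ∀ h ∈ H, χ h = 1) :
    IsCompact (closure (Subgroup.zpowers χ : Set (PontryaginDual G))) := by
  have : DiscreteTopology (G ⧸ (H : Subgroup G)) := QuotientGroup.discreteTopology H.isOpen
  let mk : G →ₜ* G ⧸ (H : Subgroup G) := ⟨QuotientGroup.mk' _, QuotientGroup.continuous_mk⟩
  let χH : PontryaginDual (G ⧸ (H : Subgroup G)) :=
    ⟨QuotientGroup.lift _ χ hχ, continuous_of_discreteTopology⟩
  refine isCompact_closure_zpowers_of_mem
    (K := (map mk : PontryaginDual (G ⧸ (H : Subgroup G)) →* PontryaginDual G).range) ?_ ⟨χH, rfl⟩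
  rw [MonoidHom.coe_range]
  exact isCompact_range (map mk).continuous

theorem exists_openSubgroup_forall_eq_one_of_isCompact_closure_zpowers [LocallyCompactSpace G]
    {χ : PontryaginDual G}
    (hχ : IsCompact (closure (Subgroup.zpowers χ : Set (PontryaginDual G)))) :
    ∃ H : OpenSubgroup G, ∀ h ∈ H, χ h = 1 := by
  obtain ⟨u, v, -, hv, hKu, h1v, huv⟩ :=
    generalized_tube_lemma hχ (isCompact_singleton (x := (1 : G)))
    ((isOpen_centeredArc (π / 2)).preimage continuous_eval) fun ⟨ψ, x⟩ ⟨_, (hx : x = 1)⟩ ↦ by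
      simpa only [Set.mem_preimage, hx, _root_.map_one] using
        mem_of_mem_nhds centeredArc_pi_div_two_mem_nhds
  have hv1 (x : G) (hx : x ∈ v) : χ x = 1 :=
    eq_one_of_forall_pow_mem_centeredArc_pi_div_two fun n _ ↦ ContinuousMonoidHom.pow_apply χ n x ▸
      huv (show (χ ^ n, x) ∈ u ×ˢ v from
        ⟨hKu (subset_closure (Subgroup.npow_mem_zpowers χ n)), hx⟩)
  let ker : Subgroup G := (χ : G →* Circle).ker
  exact ⟨⟨ker, ker.isOpen_of_mem_nhds (mem_of_superset (hv.mem_nhds (h1v rfl)) hv1)⟩,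
    fun h hh ↦ hh⟩

end PontryaginDual

theorem stmt_0_general (G : Type*) [CommGroup G] [TopologicalSpace G] [IsTopologicalGroup G]
    [LocallyCompactSpace G] (χ : PontryaginDual G) :
    (∀ g ∈ connectedComponent (1 : G), χ g = 1) ↔
      IsCompact (closure ((Subgroup.zpowers χ : Subgroup (PontryaginDual G)) :
        Set (PontryaginDual G))) := by
  constructor
  · intro hχ
    obtain ⟨H, hH⟩ :=
      PontryaginDual.exists_openSubgroup_forall_eq_one_of_forall_connectedComponent hχ
    exact PontryaginDual.isCompact_closure_zpowers_of_forall_eq_one H hH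
  · intro hχ g hg
    obtain ⟨H, hH⟩ :=
      PontryaginDual.exists_openSubgroup_forall_eq_one_of_isCompact_closure_zpowers hχ
    exact hH g (H.isClopen.connectedComponent_subset H.one_mem hg)

/-- For an LCA group `G` with identity component `G₀`, a continuous character
`χ : G → 𝕊¹` annihilates `G₀` if and only if `χ` is a compact element of the Pontryagin dual,
i.e. the closure of the cyclic subgroup generated by `χ` is compact. -/
theorem stmt_0 (G : Type*) [CommGroup G] [TopologicalSpace G] [IsTopologicalGroup G]
    [LocallyCompactSpace G] [T2Space G] (χ : PontryaginDual G) :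
    (∀ g ∈ connectedComponent (1 : G), χ g = 1) ↔
      IsCompact (closure ((Subgroup.zpowers χ : Subgroup (PontryaginDual G)) :
        Set (PontryaginDual G))) :=
  stmt_0_general G χ
end

section
/- Let G be an elliptic LCA group. Then every compact subset of G is contained in a compact open subgroup of G. In particular, the closure of every compactly generated subgroup of G is compact. -/
/-!
Choose a compact neighbourhood `V` of `1` and a finite `F` with `K ∪ V * V ∪ V⁻¹ ⊆ F * V`.
If `N` is the subgroup generated by `F`, then `N * V` is a subgroup (the group is commutative),
open because it contains `V`. Ellipticity puts `N`, a finite product of cyclic groups, inside a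
compact `C`, so the open, hence closed, subgroup `N * V ⊆ C * V` is compact.
-/

open Set Topology Pointwise

section CommGroup

variable {G : Type*} [CommGroup G]

lemma Subgroup.exists_coe_eq_mul_of_mul_subset (N : Subgroup G) {V : Set G} (h1 : 1 ∈ V)
    (hmul : V * V ⊆ N * V) (hinv : V⁻¹ ⊆ N * V) :
    ∃ H : Subgroup G, (H : Set G) = N * V := by
  have hNN : (N : Set G) * N = N := coe_mul_coe N
  have hmul' : (N : Set G) * V * (N * V) ⊆ N * V :=
    calc (N : Set G) * V * (N * V) = N * N * (V * V) := mul_mul_mul_comm _ _ _ _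
      _ ⊆ N * N * (N * V) := mul_subset_mul_left hmul
      _ = N * V := by rw [hNN, ← mul_assoc, hNN]
  have hinv' : ((N : Set G) * V)⁻¹ ⊆ N * V :=
    calc ((N : Set G) * V)⁻¹ = N * V⁻¹ := by rw [mul_inv, inv_coe_set]
      _ ⊆ N * (N * V) := mul_subset_mul_left hinv
      _ = N * V := by rw [← mul_assoc, hNN]
  exact ⟨{ carrier := N * V
           one_mem' := ⟨1, N.one_mem, 1, h1, one_mul 1⟩
           mul_mem' := fun ha hb => hmul' (mul_mem_mul ha hb)
           inv_mem' := fun ha => hinv' (inv_mem_inv.2 ha) }, rfl⟩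

lemma exists_isCompact_superset_subgroupClosure_finset [TopologicalSpace G]
    [ContinuousMul G] (F : Finset G)
    (hF : ∀ x ∈ F, IsCompact (closure ((Subgroup.zpowers x : Subgroup G) : Set G))) :
    ∃ C : Set G, IsCompact C ∧ ((Subgroup.closure (F : Set G) : Subgroup G) : Set G) ⊆ C := by
  classical
  induction F using Finset.induction_on with
  | empty => exact ⟨{1}, isCompact_singleton, by simp⟩
  | @insert a F _ ih =>
    obtain ⟨C, hC, hFC⟩ := ih fun x hx => hF x (Finset.mem_insert_of_mem hx)
    refine ⟨closure (Subgroup.zpowers a : Set G) * C,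
      (hF a (Finset.mem_insert_self a F)).mul hC, ?_⟩
    rw [Finset.coe_insert, insert_eq, Subgroup.closure_union, ← Subgroup.zpowers_eq_closure,
      Subgroup.mul_normal]
    exact mul_subset_mul subset_closure hFC

variable [TopologicalSpace G] [IsTopologicalGroup G]

lemma IsCompact.exists_finset_subset_mul {K V : Set G} (hK : IsCompact K) (hV : V ∈ 𝓝 1) :
    ∃ F : Finset G, K ⊆ F * V := by
  obtain ⟨F, hF⟩ := hK.elim_finite_subcover (fun x : G => x • interior V)
    (fun x => isOpen_interior.smul x) fun x _ =>
      mem_iUnion.2 ⟨x, 1, mem_interior_iff_mem_nhds.2 hV, mul_one x⟩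
  refine ⟨F, hF.trans ?_⟩
  rw [← iUnion_mul_left_image]
  exact iUnion₂_mono fun x _ => smul_set_mono interior_subset

theorem exists_isCompact_isOpen_subgroup_superset [WeaklyLocallyCompactSpace G]
    (hell : ∀ x : G, IsCompact (closure ((Subgroup.zpowers x : Subgroup G) : Set G)))
    {K : Set G} (hK : IsCompact K) :
    ∃ H : Subgroup G, IsCompact (H : Set G) ∧ IsOpen (H : Set G) ∧ K ⊆ H := by
  obtain ⟨V, hVc, hV⟩ := exists_compact_mem_nhds (1 : G)
  obtain ⟨F, hF⟩ := ((hK.union (hVc.mul hVc)).union hVc.inv).exists_finset_subset_mul hV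
  set N := Subgroup.closure (F : Set G)
  have hFN : (F : Set G) * V ⊆ N * V := mul_subset_mul_right Subgroup.subset_closure
  obtain ⟨H, hH⟩ := N.exists_coe_eq_mul_of_mul_subset (mem_of_mem_nhds hV)
    (fun x hx => hFN (hF (.inl (.inr hx)))) fun x hx => hFN (hF (.inr hx))
  have hVH : V ⊆ H := hH ▸ fun v hv => ⟨1, N.one_mem, v, hv, one_mul v⟩
  have hHo : IsOpen (H : Set G) := H.isOpen_of_mem_nhds (Filter.mem_of_superset hV hVH)
  obtain ⟨C, hCc, hNC⟩ := exists_isCompact_superset_subgroupClosure_finset F fun x _ => hell x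
  refine ⟨H, (hCc.mul hVc).of_isClosed_subset (H.isClosed_of_isOpen hHo) ?_, hHo,
    fun x hx => hH ▸ hFN (hF (.inl (.inl hx)))⟩
  exact hH ▸ mul_subset_mul_right hNC

end CommGroup

theorem stmt_3_general (G : Type*) [CommGroup G] [TopologicalSpace G] [IsTopologicalGroup G]
    [LocallyCompactSpace G]
    (hell : ∀ x : G, IsCompact (closure ((Subgroup.zpowers x : Subgroup G) : Set G))) :
    (∀ K : Set G, IsCompact K →
        ∃ H : Subgroup G, IsCompact (H : Set G) ∧ IsOpen (H : Set G) ∧ K ⊆ (H : Set G)) ∧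
      ∀ K : Set G, IsCompact K → IsCompact (closure ((Subgroup.closure K : Subgroup G) : Set G)) := by
  refine ⟨fun K hK => exists_isCompact_isOpen_subgroup_superset hell hK, fun K hK => ?_⟩
  obtain ⟨H, hHc, hHo, hKH⟩ := exists_isCompact_isOpen_subgroup_superset hell hK
  refine hHc.of_isClosed_subset isClosed_closure ?_
  rw [← (H.isClosed_of_isOpen hHo).closure_eq]
  exact closure_mono ((Subgroup.closure_le H).2 hKH)

/-- If `G` is an elliptic LCA group (every element is a compact element), then
every compact subset of `G` is contained in a compact open subgroup; in particular the closure of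
every compactly generated subgroup is compact. -/
theorem stmt_3 (G : Type*) [CommGroup G] [TopologicalSpace G] [IsTopologicalGroup G]
    [LocallyCompactSpace G] [T2Space G]
    (hell : ∀ x : G, IsCompact (closure ((Subgroup.zpowers x : Subgroup G) : Set G))) :
    (∀ K : Set G, IsCompact K →
        ∃ H : Subgroup G, IsCompact (H : Set G) ∧ IsOpen (H : Set G) ∧ K ⊆ (H : Set G)) ∧
      ∀ K : Set G, IsCompact K → IsCompact (closure ((Subgroup.closure K : Subgroup G) : Set G)) :=
  stmt_3_general G hell
end

section
/- Let R be a locally compact Hausdorff topological ring and M a locally compact Hausdorff topological left R-module. Then the map from (PontryaginDual M) × R to PontryaginDual M sending (χ, r) to the character χ^r : m ↦ χ(r·m) is continuous, where the Pontryagin dual carries the compact-open topology. In particular, this map makes the Pontryagin dual of M a topological right R-module. -/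
/-- For a topological module `M` over `R`, the character `χ^r : m ↦ χ (r • m)`. -/
noncomputable def charPow {R M : Type*} [Semiring R] [AddCommGroup M] [Module R M]
    [TopologicalSpace M] [ContinuousConstSMul R M] (r : R)
    (χ : PontryaginDual (Multiplicative M)) : PontryaginDual (Multiplicative M) :=
  ContinuousMonoidHom.comp χ
    { toFun := fun m => Multiplicative.ofAdd (r • m.toAdd)
      map_one' := by simp
      map_mul' := fun x y => by simp [smul_add]
      continuous_toFun := show Continuous fun m : M => r • m from continuous_const_smul r }

/-! `χ^r` is the composite `χ ∘ (r • ·)`. The map `r ↦ (r • ·)` is continuous into the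
compact-open topology because scalar multiplication is jointly continuous, and composition of
continuous homomorphisms is jointly continuous because `M` is locally compact. -/

section

variable {R M : Type*} [Semiring R] [AddCommGroup M] [Module R M] [TopologicalSpace M]

def smulContinuousMonoidHom [ContinuousConstSMul R M] (r : R) :
    Multiplicative M →ₜ* Multiplicative M where
  toFun m := Multiplicative.ofAdd (r • m.toAdd)
  map_one' := by simp
  map_mul' x y := by simp [smul_add]
  continuous_toFun := show Continuous fun m : M => r • m from continuous_const_smul r

theorem charPow_eq_comp [ContinuousConstSMul R M] (r : R)
    (χ : PontryaginDual (Multiplicative M)) :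
    charPow r χ = χ.comp (smulContinuousMonoidHom r) :=
  rfl

theorem continuous_smulContinuousMonoidHom [TopologicalSpace R] [ContinuousSMul R M] :
    Continuous (smulContinuousMonoidHom : R → Multiplicative M →ₜ* Multiplicative M) :=
  ContinuousMonoidHom.continuous_of_continuous_uncurry _
    (show Continuous fun p : R × M => p.1 • p.2 from continuous_smul)

end

theorem stmt_4_general (R M : Type*) [Ring R] [TopologicalSpace R]
    [AddCommGroup M] [Module R M] [TopologicalSpace M]
    [ContinuousSMul R M] [LocallyCompactSpace M] :
    Continuous fun p : PontryaginDual (Multiplicative M) × R => charPow p.2 p.1 := by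
  simp only [charPow_eq_comp]
  exact ContinuousMonoidHom.continuous_comp.comp
    ((continuous_smulContinuousMonoidHom.comp continuous_snd).prodMk continuous_fst)

/-- If `R` is a locally compact Hausdorff topological ring and `M` a locally
compact Hausdorff topological left `R`-module, then the map `(χ, r) ↦ χ^r` from
`PontryaginDual M × R` to `PontryaginDual M` is continuous (the dual carrying the compact-open
topology); in particular it makes the Pontryagin dual of `M` a topological right `R`-module. -/
theorem stmt_4 (R M : Type*) [Ring R] [TopologicalSpace R] [IsTopologicalRing R]
    [LocallyCompactSpace R] [T2Space R]
    [AddCommGroup M] [Module R M] [TopologicalSpace M] [IsTopologicalAddGroup M]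
    [ContinuousSMul R M] [LocallyCompactSpace M] [T2Space M] :
    Continuous fun p : PontryaginDual (Multiplicative M) × R => charPow p.2 p.1 :=
  stmt_4_general R M
end

section
/- Let Σ be a set of prime numbers, let S be the multiplicative submonoid of ℕ generated by Σ, let Q be a locally compact Hausdorff topological module over the finite adele ring A_{Σ,f} = ∏'_{q∈Σ}(ℚ_q, ℤ_q), and let C be a compact open subgroup of Q. Then for every x ∈ Q there exists s ∈ S such that s·x ∈ C; that is, Q = ⋃_{s∈S} (1/s)·C, so Q is generated by C over ℤ[S⁻¹] and in particular Q is σ-compact. -/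
open Filter Set

instance (p : Nat.Primes) : Fact (p : ℕ).Prime := ⟨p.2⟩

/-- The set of `p`-adic integers inside `ℚ_p`. -/
def padicIntSet (p : Nat.Primes) : Set ℚ_[(p : ℕ)] := {x | ‖x‖ ≤ 1}

/-- The finite adele ring associated to a set of primes `P`: the restricted product
`∏'_{q ∈ P} (ℚ_q, ℤ_q)`, as a subring of the full product. -/
def finiteAdeleSubring (P : Set Nat.Primes) : Subring ((q : P) → ℚ_[(q.1 : ℕ)]) where
  carrier := {x | ∀ᶠ q in cofinite, x q ∈ padicIntSet q.1}
  zero_mem' := by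
    show ∀ᶠ q : ↥P in cofinite, (0 : (q : ↥P) → ℚ_[(q.1 : ℕ)]) q ∈ padicIntSet q.1
    refine Eventually.of_forall fun q => ?_
    show ‖(0 : ℚ_[(q.1.1 : ℕ)])‖ ≤ 1
    simp
  one_mem' := by
    show ∀ᶠ q : ↥P in cofinite, (1 : (q : ↥P) → ℚ_[(q.1 : ℕ)]) q ∈ padicIntSet q.1
    refine Eventually.of_forall fun q => ?_
    show ‖(1 : ℚ_[(q.1.1 : ℕ)])‖ ≤ 1
    simp
  add_mem' := by
    intro a b ha hb
    have ha' : ∀ᶠ q in cofinite, a q ∈ padicIntSet q.1 := ha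
    have hb' : ∀ᶠ q in cofinite, b q ∈ padicIntSet q.1 := hb
    refine (ha'.and hb').mono fun q h => ?_
    exact le_trans (Padic.nonarchimedean _ _) (max_le (show ‖a q‖ ≤ 1 from h.1) (show ‖b q‖ ≤ 1 from h.2))
  neg_mem' := by
    intro a ha
    have ha' : ∀ᶠ q in cofinite, a q ∈ padicIntSet q.1 := ha
    refine ha'.mono fun q h => ?_
    show ‖-(a q)‖ ≤ 1
    simpa using (show ‖a q‖ ≤ 1 from h)
  mul_mem' := by
    intro a b ha hb
    have ha' : ∀ᶠ q in cofinite, a q ∈ padicIntSet q.1 := ha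
    have hb' : ∀ᶠ q in cofinite, b q ∈ padicIntSet q.1 := hb
    refine (ha'.and hb').mono fun q h => ?_
    show ‖a q * b q‖ ≤ 1
    calc ‖a q * b q‖ = ‖a q‖ * ‖b q‖ := norm_mul _ _
    _ ≤ 1 := mul_le_one₀ h.1 (norm_nonneg _) h.2

/-- The finite adele ring, as a type. -/
def FiniteAdeles (P : Set Nat.Primes) := ↥(finiteAdeleSubring P)

noncomputable instance (P : Set Nat.Primes) : CommRing (FiniteAdeles P) :=
  inferInstanceAs (CommRing ↥(finiteAdeleSubring P))

/-- Underlying element of the product. -/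
def FiniteAdeles.val (P : Set Nat.Primes) : FiniteAdeles P → ((q : P) → ℚ_[(q.1 : ℕ)]) :=
  Subtype.val

/-- The restricted product topology on the finite adele ring: generated by the open boxes
`∏ U_q` with every `U_q` open and `U_q = ℤ_q` for all but finitely many `q`. -/
instance (P : Set Nat.Primes) : TopologicalSpace (FiniteAdeles P) :=
  TopologicalSpace.generateFrom
    {s | ∃ U : (q : P) → Set ℚ_[(q.1 : ℕ)], (∀ q, IsOpen (U q)) ∧
      (∀ᶠ q in cofinite, U q = padicIntSet q.1) ∧ s = FiniteAdeles.val P ⁻¹' Set.pi univ U}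



/-!
The integers `s_n = ∏_{p ∈ Σ, p < n} p ^ n` lie in `S`, are units of `A_{Σ,f}`, and tend to `0`
in `A_{Σ,f}`: every coordinate of a natural number is `q`-adically integral, and for fixed
`q ∈ Σ` the coordinate at `q` is divisible by `q ^ n` once `n > q`. By continuity of the action,
`s_n • x → 0`, so `s_n • x` eventually lies in the open subgroup `C`. Hence
`Q = ⋃ₙ s_n⁻¹ • C` is a countable union of compact sets.
-/

open Topology
open scoped Pointwise

section primePowProd

open scoped Classical

noncomputable def primePowProd (P : Set Nat.Primes) (n : ℕ) : ℕ :=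
  ∏ p ∈ n.primesBelow with p ∈ (fun q : Nat.Primes => (q : ℕ)) '' P, p ^ n

variable {P : Set Nat.Primes}

lemma primePowProd_mem_closure (n : ℕ) :
    primePowProd P n ∈ Submonoid.closure ((fun p : Nat.Primes => (p : ℕ)) '' P) :=
  Submonoid.prod_mem _ fun _ hp =>
    pow_mem (Submonoid.subset_closure (Finset.mem_filter.mp hp).2) _

lemma primePowProd_ne_zero (n : ℕ) : primePowProd P n ≠ 0 :=
  Finset.prod_ne_zero_iff.mpr fun _ hp =>
    pow_ne_zero _ (Nat.prime_of_mem_primesBelow (Finset.mem_filter.mp hp).1).ne_zero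

lemma pow_dvd_primePowProd {q : Nat.Primes} (hq : q ∈ P) {n : ℕ} (hn : (q : ℕ) < n) :
    (q : ℕ) ^ n ∣ primePowProd P n :=
  Finset.dvd_prod_of_mem _ <| Finset.mem_filter.mpr
    ⟨Nat.mem_primesBelow.mpr ⟨hn, q.2⟩, Set.mem_image_of_mem _ hq⟩

end primePowProd

lemma Padic.tendsto_natCast_zero_of_pow_dvd {p : ℕ} [Fact p.Prime] {a : ℕ → ℕ}
    (h : ∀ᶠ n in atTop, p ^ n ∣ a n) : Tendsto (fun n => (a n : ℚ_[p])) atTop (𝓝 0) := by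
  have hp : ‖(p : ℚ_[p])‖ < 1 := Padic.norm_natCast_lt_one_iff.mpr dvd_rfl
  refine squeeze_zero_norm' (a := fun n => ‖(p : ℚ_[p])‖ ^ n) ?_
    (tendsto_pow_atTop_nhds_zero_of_lt_one (norm_nonneg _) hp)
  filter_upwards [h] with n ⟨k, hk⟩
  rw [hk, Nat.cast_mul, Nat.cast_pow, norm_mul, norm_pow]
  exact mul_le_of_le_one_right (by positivity) (by simpa using Padic.norm_int_le_one (k : ℤ))

lemma natCast_mem_padicIntSet (p : Nat.Primes) (m : ℕ) : (m : ℚ_[(p : ℕ)]) ∈ padicIntSet p := by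
  show ‖_‖ ≤ 1
  simpa using Padic.norm_int_le_one (p := (p : ℕ)) m

namespace FiniteAdeles

variable {P : Set Nat.Primes}

lemma val_natCast (m : ℕ) (q : P) : FiniteAdeles.val P m q = m :=
  map_natCast ((Pi.evalRingHom _ q).comp (finiteAdeleSubring P).subtype) m

lemma tendsto_natCast_zero {α : Type*} {l : Filter α} {a : α → ℕ}
    (h : ∀ q : P, Tendsto (fun i => (a i : ℚ_[(q.1 : ℕ)])) l (𝓝 0)) :
    Tendsto (fun i => (a i : FiniteAdeles P)) l (𝓝 0) := by
  refine TopologicalSpace.tendsto_nhds_generateFrom_iff.mpr ?_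
  rintro _ ⟨U, hUo, hUc, rfl⟩ h0
  have hF : {q | U q ≠ padicIntSet q.1}.Finite := hUc
  filter_upwards [(eventually_all_finite hF).mpr fun q _ =>
    h q |>.eventually ((hUo q).mem_nhds (h0 q (mem_univ q)))] with i hi q _
  rw [val_natCast]
  by_cases hq : U q = padicIntSet q.1
  · exact hq ▸ natCast_mem_padicIntSet q.1 (a i)
  · exact hi q hq

lemma isUnit_natCast {m : ℕ} (hm : m ≠ 0) : IsUnit (m : FiniteAdeles P) := by
  have hinv : (fun q : P => (m : ℚ_[(q.1 : ℕ)])⁻¹) ∈ finiteAdeleSubring P := by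
    have hlarge : ∀ᶠ q : P in cofinite, m < (q.1 : ℕ) :=
      (Nat.Primes.coe_nat_injective.comp Subtype.val_injective).tendsto_cofinite.eventually
        (Nat.cofinite_eq_atTop ▸ eventually_gt_atTop m)
    refine hlarge.mono fun q hq => ?_
    have : ‖(m : ℚ_[(q.1 : ℕ)])‖ = 1 := by
      rw [Padic.norm_natCast_eq_one_iff]
      exact q.1.2.coprime_iff_not_dvd.mpr fun hdvd =>
        hq.not_ge (Nat.le_of_dvd (Nat.pos_of_ne_zero hm) hdvd)
    show ‖_‖ ≤ 1
    rw [norm_inv, this, inv_one]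
  refine IsUnit.of_mul_eq_one ⟨_, hinv⟩ (Subtype.ext (funext fun q => ?_))
  show FiniteAdeles.val P m q * (m : ℚ_[(q.1 : ℕ)])⁻¹ = 1
  rw [val_natCast]
  exact mul_inv_cancel₀ (Nat.cast_ne_zero.mpr hm)

end FiniteAdeles

lemma sigmaCompactSpace_of_forall_exists_smul_mem {R M : Type*} [Monoid R] [MulAction R M]
    [TopologicalSpace M] [ContinuousConstSMul R M] {r : ℕ → R} (hr : ∀ n, IsUnit (r n))
    {K : Set M} (hK : IsCompact K) (h : ∀ x, ∃ n, r n • x ∈ K) : SigmaCompactSpace M := by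
  refine ⟨⟨fun n => (hr n).unit⁻¹ • K, fun n => hK.smul _, eq_univ_of_forall fun x => ?_⟩⟩
  obtain ⟨n, hn⟩ := h x
  exact mem_iUnion.mpr ⟨n, Set.mem_inv_smul_set_iff.mpr hn⟩

theorem stmt_7_general (P : Set Nat.Primes) (Q : Type*) [AddCommGroup Q]
    [Module (FiniteAdeles P) Q] [TopologicalSpace Q]
    [ContinuousSMul (FiniteAdeles P) Q]
    (C : AddSubgroup Q) (hCc : IsCompact (C : Set Q)) (hCo : IsOpen (C : Set Q)) :
    (∀ x : Q, ∃ s ∈ Submonoid.closure ((fun p : Nat.Primes => (p : ℕ)) '' P), s • x ∈ C) ∧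
      SigmaCompactSpace Q := by
  have hlim : Tendsto (fun n => (primePowProd P n : FiniteAdeles P)) atTop (𝓝 0) :=
    FiniteAdeles.tendsto_natCast_zero fun q => Padic.tendsto_natCast_zero_of_pow_dvd <|
      (eventually_gt_atTop (q.1 : ℕ)).mono fun _ => pow_dvd_primePowProd q.2
  have hmem : ∀ x : Q, ∃ n, (primePowProd P n : FiniteAdeles P) • x ∈ C := fun x =>
    ((hlim.smul_const x).eventually (hCo.mem_nhds (by simp))).exists
  refine ⟨fun x => ?_, sigmaCompactSpace_of_forall_exists_smul_mem
    (fun n => FiniteAdeles.isUnit_natCast (primePowProd_ne_zero n)) hCc hmem⟩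
  obtain ⟨n, hn⟩ := hmem x
  exact ⟨_, primePowProd_mem_closure n, by rwa [← Nat.cast_smul_eq_nsmul (FiniteAdeles P)]⟩

/-- If `Q` is a locally compact Hausdorff topological module over the finite
adele ring `A_{Σ,f}` and `C` is a compact open subgroup of `Q`, then every `x ∈ Q` satisfies
`s • x ∈ C` for some `s` in the multiplicative submonoid `S` of `ℕ` generated by `Σ`; that is,
`Q = ⋃_{s ∈ S} (1/s)·C`, so `Q` is generated by `C` over `ℤ[S⁻¹]`, and in particular `Q` is
σ-compact. -/
theorem stmt_7 (P : Set Nat.Primes) (Q : Type*) [AddCommGroup Q]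
    [Module (FiniteAdeles P) Q] [TopologicalSpace Q] [IsTopologicalAddGroup Q]
    [ContinuousSMul (FiniteAdeles P) Q] [LocallyCompactSpace Q] [T2Space Q]
    (C : AddSubgroup Q) (hCc : IsCompact (C : Set Q)) (hCo : IsOpen (C : Set Q)) :
    (∀ x : Q, ∃ s ∈ Submonoid.closure ((fun p : Nat.Primes => (p : ℕ)) '' P), s • x ∈ C) ∧
      SigmaCompactSpace Q :=
  stmt_7_general P Q C hCc hCo
end

section
/- Let R be a topological ring and let M be a locally compact Hausdorff topological left R-module which is finitely generated as an R-module. Then the Pontryagin dual of M has no small submodules: there exists a neighbourhood V of the trivial character in the Pontryagin dual of M such that the only character χ of M with χ^r ∈ V for every r ∈ R is the trivial character. -/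
open Real

theorem Real.eq_zero_of_forall_cos_nat_mul_pos {t : ℝ} (ht₀ : 0 ≤ t) (htπ : t ≤ π)
    (h : ∀ n : ℕ, 0 < cos (n * t)) : t = 0 := by
  by_contra hne
  have ht : 0 < t := ht₀.lt_of_ne' hne
  set n := ⌈π / 2 / t⌉₊
  have hlow : π / 2 ≤ n * t := (div_le_iff₀ ht).mp (Nat.le_ceil _)
  have hup : n * t ≤ π + π / 2 := by
    have := (Nat.ceil_lt_add_one (div_nonneg pi_div_two_pos.le ht₀)).le
    calc n * t ≤ (π / 2 / t + 1) * t := by gcongr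
      _ = π / 2 + t := by field_simp
      _ ≤ π + π / 2 := by linarith
  exact (h n).not_ge (cos_nonpos_of_pi_div_two_le_of_le hlow hup)

theorem Circle.re_pow (z : Circle) (n : ℕ) :
    ((z ^ n : Circle) : ℂ).re = cos (n * Complex.arg z) := by
  conv_lhs => rw [← Circle.exp_arg z, ← Circle.exp_natCast_mul, Circle.coe_exp]
  exact_mod_cast Complex.exp_ofReal_mul_I_re _

theorem Circle.eq_one_of_forall_re_pow_pos (z : Circle)
    (h : ∀ n : ℕ, 0 < ((z ^ n : Circle) : ℂ).re) : z = 1 := by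
  have hcos (n : ℕ) : 0 < cos (n * |Complex.arg z|) := by
    rw [← abs_of_nonneg (Nat.cast_nonneg (α := ℝ) n), ← abs_mul, cos_abs, ← Circle.re_pow]
    exact h n
  have harg : Complex.arg z = 0 := abs_eq_zero.mp <|
    Real.eq_zero_of_forall_cos_nat_mul_pos (abs_nonneg _) (Complex.abs_arg_le_pi _) hcos
  rw [← Circle.exp_arg z, harg, Circle.exp_zero]

theorem PontryaginDual.isOpen_setOf_mapsTo {A : Type*} [Monoid A] [TopologicalSpace A]
    {K : Set A} (hK : IsCompact K) {U : Set Circle} (hU : IsOpen U) :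
    IsOpen {χ : PontryaginDual A | Set.MapsTo χ K U} :=
  (ContinuousMap.isOpen_setOfPred_mapsTo hK hU).preimage
    (ContinuousMonoidHom.isInducing_toContinuousMap A Circle).continuous

section charPow

variable {R M : Type*} [Semiring R] [AddCommGroup M] [Module R M] [TopologicalSpace M]

theorem PontryaginDual.eq_one_of_map_smul_eq_one {S : Set M} (hS : Submodule.span R S = ⊤)
    (χ : PontryaginDual (Multiplicative M))
    (h : ∀ s ∈ S, ∀ r : R, χ (Multiplicative.ofAdd (r • s)) = 1) : χ = 1 := by
  have hspan (m : M) : ∀ r : R, χ (Multiplicative.ofAdd (r • m)) = 1 := by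
    induction (hS ▸ Submodule.mem_top : m ∈ Submodule.span R S) using Submodule.span_induction with
    | mem s hs => exact h s hs
    | zero => simp
    | add x y _ _ hx hy => intro r; rw [smul_add, ofAdd_add, _root_.map_mul, hx, hy, mul_one]
    | smul a x _ hx => intro r; rw [smul_smul, hx]
  refine ContinuousMonoidHom.ext fun m => show χ m = 1 from ?_
  simpa using hspan m.toAdd 1

variable [ContinuousConstSMul R M]

theorem charPow_nsmul_apply (n : ℕ) (r : R) (χ : PontryaginDual (Multiplicative M)) (m : M) :
    charPow (n • r) χ (Multiplicative.ofAdd m) = χ (Multiplicative.ofAdd (r • m)) ^ n := by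
  rw [← map_pow, ← ofAdd_nsmul, ← smul_assoc]
  rfl

end charPow

theorem stmt_13_general (R M : Type*) [Ring R] [TopologicalSpace R]
    [AddCommGroup M] [Module R M] [TopologicalSpace M]
    [ContinuousSMul R M] [Module.Finite R M] :
    ∃ V ∈ nhds (1 : PontryaginDual (Multiplicative M)),
      ∀ χ : PontryaginDual (Multiplicative M), (∀ r : R, charPow r χ ∈ V) → χ = 1 := by
  obtain ⟨S, hS⟩ := Module.Finite.fg_top (R := R) (M := M)
  let K : Set (Multiplicative M) := Multiplicative.ofAdd '' S
  let U : Set Circle := {z | 0 < (z : ℂ).re}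
  refine ⟨{χ | Set.MapsTo χ K U}, ?_, fun χ hχ => ?_⟩
  · refine (PontryaginDual.isOpen_setOf_mapsTo (S.finite_toSet.image _).isCompact ?_).mem_nhds ?_
    · exact isOpen_lt continuous_const (Complex.continuous_re.comp continuous_subtype_val)
    · intro _ _
      simp [U]
  · refine PontryaginDual.eq_one_of_map_smul_eq_one hS χ fun s hs r => ?_
    refine Circle.eq_one_of_forall_re_pow_pos _ fun n => ?_
    rw [← charPow_nsmul_apply]
    exact hχ (n • r) (Set.mem_image_of_mem _ hs)

/-- Let `R` be a topological ring and `M` a locally compact Hausdorff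
topological `R`-module that is finitely generated over `R`. Then the Pontryagin dual of `M` has
no small submodules: there is a neighbourhood `V` of the trivial character such that the only
character `χ` with `χ^r ∈ V` for every `r ∈ R` is the trivial one. -/
theorem stmt_13 (R M : Type*) [Ring R] [TopologicalSpace R] [IsTopologicalRing R]
    [AddCommGroup M] [Module R M] [TopologicalSpace M] [IsTopologicalAddGroup M]
    [ContinuousSMul R M] [LocallyCompactSpace M] [T2Space M] [Module.Finite R M] :
    ∃ V ∈ nhds (1 : PontryaginDual (Multiplicative M)),
      ∀ χ : PontryaginDual (Multiplicative M), (∀ r : R, charPow r χ ∈ V) → χ = 1 :=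
  stmt_13_general R M
end

section
/- Let Σ be a set of prime numbers, S the multiplicative submonoid of ℕ generated by Σ, and M a locally compact Hausdorff topological module over the discrete ring ℤ[S⁻¹] such that M contains a compact open subgroup and M is compactly generated. Then there exist k ∈ ℕ and an isomorphism of topological ℤ[S⁻¹]-modules M ≅ (ℤ[S⁻¹])^k × C(M), where (ℤ[S⁻¹])^k carries the discrete topology and C(M) is the submodule of compact elements of M. -/
/-!
The compact elements form a submodule `N` containing the compact open subgroup, so `N` is open and
`M ⧸ N` is discrete; the image of a compact generating set is then a finite generating set of
`M ⧸ N`. The quotient is torsion-free: for `r = a / b ≠ 0` in `ℤ[S⁻¹]` we have `a • x = b • (r • x)`,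
and if `a • x` is a compact element then finitely many translates of the closure of `ℤ • (a • x)`
cover `ℤ • x`. Since every subring of `ℚ` is a PID, `M ⧸ N` is free of finite rank, and any linear
section of `M → M ⧸ N` is continuous because its domain is discrete, so it splits `M ≅ (M ⧸ N) × N`
topologically.
-/

open Filter Set Pointwise

/-- `ℤ[S⁻¹]`: the subring of `ℚ` generated by `ℤ` together with the inverses of the primes
in `P` (where `S` is the multiplicative submonoid of `ℕ` generated by `P`). -/
def zLoc (P : Set Nat.Primes) : Subring ℚ :=
  Subring.closure {x : ℚ | ∃ q ∈ P, x = ((q : ℕ) : ℚ)⁻¹}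

/-- `ℤ[S⁻¹]`, regarded as a discrete topological ring. -/
def ZS (P : Set Nat.Primes) := ↥(zLoc P)

instance (P : Set Nat.Primes) : CommRing (ZS P) := inferInstanceAs (CommRing ↥(zLoc P))

instance (P : Set Nat.Primes) : TopologicalSpace (ZS P) := ⊥

instance (P : Set Nat.Primes) : DiscreteTopology (ZS P) := ⟨rfl⟩

instance (P : Set Nat.Primes) : IsTopologicalRing (ZS P) where
  continuous_add := continuous_of_discreteTopology
  continuous_mul := continuous_of_discreteTopology
  continuous_neg := continuous_of_discreteTopology

/-- The inclusion `ℤ[S⁻¹] → ℚ`. -/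
def ZSval (P : Set Nat.Primes) : ZS P →+* ℚ := (zLoc P).subtype

/-- The compact elements of a locally compact topological module form a submodule. -/
def compactElements (R M : Type*) [Semiring R] [AddCommGroup M] [Module R M]
    [TopologicalSpace M] [IsTopologicalAddGroup M] [T2Space M] [ContinuousConstSMul R M] :
    Submodule R M where
  carrier := {x | IsCompact (closure ((AddSubgroup.zmultiples x : AddSubgroup M) : Set M))}
  zero_mem' := by
    show IsCompact (closure ((AddSubgroup.zmultiples (0 : M) : AddSubgroup M) : Set M))
    have h : ((AddSubgroup.zmultiples (0 : M) : AddSubgroup M) : Set M) = {0} := by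
      ext y
      simp [AddSubgroup.mem_zmultiples_iff, eq_comm]
    rw [h, closure_singleton]
    exact isCompact_singleton
  add_mem' := by
    intro a b ha hb
    have ha' : IsCompact (closure ((AddSubgroup.zmultiples a : AddSubgroup M) : Set M)) := ha
    have hb' : IsCompact (closure ((AddSubgroup.zmultiples b : AddSubgroup M) : Set M)) := hb
    have hsum := ha'.add hb'
    refine IsCompact.of_isClosed_subset hsum isClosed_closure
      (closure_minimal ?_ hsum.isClosed)
    rintro y hy
    obtain ⟨k, rfl⟩ := AddSubgroup.mem_zmultiples_iff.mp hy
    rw [smul_add]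
    exact Set.add_mem_add (subset_closure (AddSubgroup.zsmul_mem_zmultiples a k))
      (subset_closure (AddSubgroup.zsmul_mem_zmultiples b k))
  smul_mem' := by
    intro r x hx
    have hx' : IsCompact (closure ((AddSubgroup.zmultiples x : AddSubgroup M) : Set M)) := hx
    have himg : IsCompact
        ((r • ·) '' closure ((AddSubgroup.zmultiples x : AddSubgroup M) : Set M)) :=
      hx'.image (continuous_const_smul r)
    refine IsCompact.of_isClosed_subset himg isClosed_closure
      (closure_minimal ?_ himg.isClosed)
    rintro y hy
    obtain ⟨k, rfl⟩ := AddSubgroup.mem_zmultiples_iff.mp hy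
    refine ⟨k • x, subset_closure (AddSubgroup.zsmul_mem_zmultiples x k), ?_⟩
    show r • k • x = k • r • x; exact smul_comm r k x

theorem Subring.inv_den_mem (R : Subring ℚ) {x : ℚ} (hx : x ∈ R) : (x.den : ℚ)⁻¹ ∈ R := by
  have hcop : Int.gcd x.num x.den = 1 := x.reduced
  have hbezout : (x.num * x.num.gcdA x.den + x.den * x.num.gcdB x.den : ℚ) = 1 := by
    exact_mod_cast (Int.gcd_eq_gcd_ab x.num x.den).symm.trans (by rw [hcop]; rfl)
  have : (x.den : ℚ)⁻¹ = x.num.gcdA x.den * x + x.num.gcdB x.den := by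
    refine inv_eq_of_mul_eq_one_right ?_
    linear_combination hbezout + x.num.gcdA x.den * Rat.den_mul_eq_num x
  rw [this]
  exact R.add_mem (R.mul_mem (intCast_mem R _) hx) (intCast_mem R _)

theorem Subring.den_mul_eq_num {R : Subring ℚ} (x : R) : ((x : ℚ).den : R) * x = (x : ℚ).num := by
  ext
  push_cast
  exact Rat.den_mul_eq_num _

theorem Subring.map_comap_intCast (R : Subring ℚ) (I : Ideal R) :
    (I.comap (Int.castRingHom R)).map (Int.castRingHom R) = I := by
  refine le_antisymm (Ideal.map_comap_le) fun x hx => ?_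
  have hnum : (x : ℚ).num ∈ I.comap (Int.castRingHom R) := by
    simpa [← Subring.den_mul_eq_num] using I.mul_mem_left _ hx
  have : x = ((x : ℚ).num : R) * ⟨_, R.inv_den_mem x.2⟩ := by
    ext; push_cast
    rw [← div_eq_mul_inv, Rat.num_div_den]
  rw [this]
  exact Ideal.mul_mem_right _ _ (Ideal.mem_map_of_mem _ hnum)

instance Rat.isPrincipalIdealRing_subring (R : Subring ℚ) : IsPrincipalIdealRing R where
  principal I := R.map_comap_intCast I ▸ (IsPrincipalIdealRing.principal _).map_ringHom _

theorem isCompact_closure_zmultiples_of_zsmul {G : Type*} [AddGroup G] [TopologicalSpace G]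
    [IsTopologicalAddGroup G] [T2Space G] {x : G} {n : ℤ} (hn : n ≠ 0)
    (h : IsCompact (closure (AddSubgroup.zmultiples (n • x) : Set G))) :
    IsCompact (closure (AddSubgroup.zmultiples x : Set G)) := by
  set F : Set G := (fun j : ℕ => (j : ℤ) • x) '' Set.Iio n.natAbs
  have hcover : IsCompact (F + closure (AddSubgroup.zmultiples (n • x) : Set G)) :=
    ((Set.finite_Iio _).image _).isCompact.add h
  refine hcover.of_isClosed_subset isClosed_closure (closure_minimal ?_ hcover.isClosed)
  rintro _ ⟨k, rfl⟩
  have hrem : 0 ≤ k % n := Int.emod_nonneg k hn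
  have hlt : k % n < n.natAbs := Int.emod_lt k hn
  have hk : k • x = (k % n) • x + (k / n) • (n • x) := by
    rw [← mul_zsmul', ← add_zsmul, Int.emod_add_mul_ediv]
  change k • x ∈ _
  rw [hk]
  refine Set.add_mem_add ⟨(k % n).toNat, ?_, ?_⟩ (subset_closure ⟨k / n, rfl⟩)
  · simp only [Set.mem_Iio]
    omega
  · simp only [Int.toNat_of_nonneg hrem]

section CompactElements

variable {R M : Type*} [Ring R] [AddCommGroup M] [Module R M] [TopologicalSpace M]
  [IsTopologicalAddGroup M] [T2Space M] [ContinuousConstSMul R M]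

variable (R) in
theorem AddSubgroup.coe_subset_compactElements {C : AddSubgroup M} (hC : IsCompact (C : Set M)) :
    (C : Set M) ⊆ compactElements R M := fun _ hx =>
  hC.of_isClosed_subset isClosed_closure <|
    closure_minimal (fun _ ⟨k, hk⟩ => hk ▸ C.zsmul_mem hx k) hC.isClosed

variable (R) in
theorem isOpen_compactElements {C : AddSubgroup M} (hC : IsCompact (C : Set M))
    (hCo : IsOpen (C : Set M)) : IsOpen (compactElements R M : Set M) :=
  have hle : C ≤ (compactElements R M).toAddSubgroup :=
    AddSubgroup.coe_subset_compactElements R hC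
  AddSubgroup.isOpen_mono hle hCo

end CompactElements

theorem Submodule.finite_quotient_of_discreteTopology {R M : Type*} [Ring R] [AddCommGroup M]
    [Module R M] [TopologicalSpace M] (N : Submodule R M) [DiscreteTopology (M ⧸ N)]
    {K : Set M} (hK : IsCompact K) (hspan : span R K = ⊤) : Module.Finite R (M ⧸ N) := by
  refine ⟨fg_def.2 ⟨_, (hK.image N.continuous_mkQ).finite_of_discrete, ?_⟩⟩
  rw [← map_span, hspan, map_top, range_mkQ]

theorem Submodule.nonempty_continuousLinearEquiv_quotient_prod {R M : Type*} [Ring R]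
    [AddCommGroup M] [Module R M] [TopologicalSpace M] [IsTopologicalAddGroup M]
    (N : Submodule R M) [DiscreteTopology (M ⧸ N)] [Module.Projective R (M ⧸ N)] :
    Nonempty (M ≃L[R] (M ⧸ N) × N) := by
  obtain ⟨s, hs⟩ := Module.projective_lifting_property N.mkQ LinearMap.id N.mkQ_surjective
  let sL : M ⧸ N →L[R] M := ⟨s, continuous_of_discreteTopology⟩
  exact ⟨(ContinuousLinearEquiv.equivOfRightInverse N.mkQL sL (LinearMap.congr_fun hs)).trans
    ((ContinuousLinearEquiv.refl R _).prodCongr (.ofEq _ _ N.ker_mkQ))⟩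

theorem nonempty_continuousLinearEquiv_fin_finrank {R Q : Type*} [Ring R] [StrongRankCondition R]
    [TopologicalSpace R] [DiscreteTopology R] [AddCommGroup Q] [Module R Q] [TopologicalSpace Q]
    [DiscreteTopology Q] [Module.Free R Q] [Module.Finite R Q] :
    Nonempty (Q ≃L[R] (Fin (Module.finrank R Q) → R)) :=
  ⟨{ (Module.finBasis R Q).equivFun with
      continuous_toFun := continuous_of_discreteTopology
      continuous_invFun := continuous_of_discreteTopology }⟩

instance (P : Set Nat.Primes) : IsDomain (ZS P) := inferInstanceAs (IsDomain (zLoc P))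

instance (P : Set Nat.Primes) : IsPrincipalIdealRing (ZS P) :=
  inferInstanceAs (IsPrincipalIdealRing (zLoc P))

section Localization

variable {P : Set Nat.Primes} {M : Type*} [AddCommGroup M] [Module (ZS P) M] [TopologicalSpace M]
  [IsTopologicalAddGroup M] [T2Space M] [ContinuousConstSMul (ZS P) M]

theorem mem_compactElements_of_smul_mem {r : ZS P} (hr : r ≠ 0) {x : M}
    (h : r • x ∈ compactElements (ZS P) M) : x ∈ compactElements (ZS P) M := by
  have hnum : ((ZSval P r).num : ZS P) • x = ((ZSval P r).den : ZS P) • r • x := by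
    rw [smul_smul]
    congr 1
    exact ((zLoc P).den_mul_eq_num r).symm
  have hnum0 : (ZSval P r).num ≠ 0 :=
    Rat.num_ne_zero.2 ((map_ne_zero_iff _ Subtype.val_injective).2 hr)
  refine isCompact_closure_zmultiples_of_zsmul hnum0 ?_
  rw [← Int.cast_smul_eq_zsmul (ZS P), hnum]
  exact (compactElements (ZS P) M).smul_mem _ h

instance : Module.IsTorsionFree (ZS P) (M ⧸ compactElements (ZS P) M) :=
  .of_smul_eq_zero fun r q => Submodule.Quotient.induction_on _ q fun x hx => by
    simp only [← Submodule.Quotient.mk_smul, Submodule.Quotient.mk_eq_zero] at hx ⊢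
    exact or_iff_not_imp_left.2 fun hr => mem_compactElements_of_smul_mem hr hx

end Localization

theorem stmt_14_general (P : Set Nat.Primes) (M : Type*) [AddCommGroup M] [Module (ZS P) M]
    [TopologicalSpace M] [IsTopologicalAddGroup M] [ContinuousSMul (ZS P) M]
    [T2Space M]
    (hopen : ∃ C : AddSubgroup M, IsCompact (C : Set M) ∧ IsOpen (C : Set M))
    (hcg : ∃ K : Set M, IsCompact K ∧ Submodule.span (ZS P) K = ⊤) :
    ∃ k : ℕ, ∃ e : M ≃ₗ[ZS P] (Fin k → ZS P) × ↥(compactElements (ZS P) M),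
      Continuous ⇑e ∧ Continuous ⇑e.symm := by
  obtain ⟨C, hCcomp, hCopen⟩ := hopen
  obtain ⟨K, hKcomp, hKspan⟩ := hcg
  set N := compactElements (ZS P) M
  have : DiscreteTopology (M ⧸ N) :=
    QuotientAddGroup.discreteTopology (isOpen_compactElements (ZS P) hCcomp hCopen)
  have : Module.Finite (ZS P) (M ⧸ N) := N.finite_quotient_of_discreteTopology hKcomp hKspan
  obtain ⟨e₁⟩ := N.nonempty_continuousLinearEquiv_quotient_prod
  obtain ⟨e₂⟩ := nonempty_continuousLinearEquiv_fin_finrank (R := ZS P) (Q := M ⧸ N)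
  let e := e₁.trans (e₂.prodCongr (.refl _ _))
  exact ⟨_, e.toLinearEquiv, e.continuous, e.symm.continuous⟩

/-- Let `M` be a locally compact Hausdorff topological module over the discrete
ring `ℤ[S⁻¹]` which contains a compact open subgroup and is compactly generated. Then
`M ≅ (ℤ[S⁻¹])^k × C(M)` as topological `ℤ[S⁻¹]`-modules for some `k`, where `(ℤ[S⁻¹])^k` is
discrete and `C(M)` is the submodule of compact elements of `M`. -/
theorem stmt_14 (P : Set Nat.Primes) (M : Type*) [AddCommGroup M] [Module (ZS P) M]
    [TopologicalSpace M] [IsTopologicalAddGroup M] [ContinuousSMul (ZS P) M]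
    [LocallyCompactSpace M] [T2Space M]
    (hopen : ∃ C : AddSubgroup M, IsCompact (C : Set M) ∧ IsOpen (C : Set M))
    (hcg : ∃ K : Set M, IsCompact K ∧ Submodule.span (ZS P) K = ⊤) :
    ∃ k : ℕ, ∃ e : M ≃ₗ[ZS P] (Fin k → ZS P) × ↥(compactElements (ZS P) M),
      Continuous ⇑e ∧ Continuous ⇑e.symm :=
  stmt_14_general P M hopen hcg
end

section
/- Let Σ be a set of prime numbers, S the multiplicative submonoid of ℕ generated by Σ, and M a locally compact Hausdorff topological module over the discrete ring ℤ[S⁻¹]. Then M is compactly generated if and only if the Pontryagin dual of M has no small submodules; that is, there exists a compact subset K of M whose ℤ[S⁻¹]-submodule span is all of M if and only if there exists a neighbourhood V of the trivial character in the Pontryagin dual of M such that the only character χ of M with χ^r ∈ V for every r ∈ ℤ[S⁻¹] is the trivial character. -/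
open Filter Set Pointwise

/-!
If a compact set `K` spans `M`, take `V` to be the characters mapping `K` into the open right half
of the circle. If every `χ^r` lies in `V`, then all powers of `χ (r • k)` lie in that half-circle,
which contains no nontrivial subgroup; so `χ` is trivial on `R • K`, hence on its span `M`.

Conversely, `V` contains every character trivial on some compact set `K`. Together with a compact
neighbourhood of `0`, `K` spans an open submodule `N`. If `N ≠ M`, the discrete group `M ⧸ N` has
a nontrivial character (built from a `ℚ/ℤ`-valued one), and its pullback `χ ≠ 1` has every `χ^r`
trivial on `K`, hence in `V`.
-/

open Real Topology Submodule

namespace AddCircle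

noncomputable def ratCastHom : AddCircle (1 : ℚ) →+ AddCircle (1 : ℝ) :=
  QuotientAddGroup.map _ _ (Rat.castHom ℝ).toAddMonoidHom <|
    AddSubgroup.zmultiples_le.2 <| by simp

lemma ratCastHom_coe (q : ℚ) : ratCastHom q = ((q : ℝ) : AddCircle (1 : ℝ)) := rfl

lemma injective_ratCastHom : Function.Injective ratCastHom := by
  refine (injective_iff_map_eq_zero _).2 fun x hx ↦ ?_
  induction x using QuotientAddGroup.induction_on with
  | H q =>
    obtain ⟨n, hn⟩ := (coe_eq_zero_iff _).1 ((ratCastHom_coe q).symm.trans hx)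
    rw [zsmul_one] at hn
    exact (coe_eq_zero_iff _).2 ⟨n, by rw [zsmul_one]; exact_mod_cast hn⟩

end AddCircle

lemma Circle.one_mem_centeredArc {r : ℝ} (hr : 0 < r) : (1 : Circle) ∈ centeredArc r :=
  ⟨0, by simpa using hr, Circle.exp_zero⟩

lemma exists_addChar_circle_apply_ne_one {A : Type*} [AddCommGroup A] {a : A} (ha : a ≠ 0) :
    ∃ ψ : AddChar A Circle, ψ a ≠ 1 := by
  obtain ⟨c, hc⟩ := CharacterModule.exists_character_apply_ne_zero_of_ne_zero ha
  refine ⟨AddCircle.toCircle_addChar.compAddMonoidHom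
    (AddCircle.ratCastHom.comp (c : A →+ AddCircle (1 : ℚ))), ?_⟩
  change AddCircle.toCircle (AddCircle.ratCastHom (c a)) ≠ 1
  rwa [← AddCircle.toCircle_zero, (AddCircle.injective_toCircle one_ne_zero).ne_iff,
    ← map_zero AddCircle.ratCastHom, AddCircle.injective_ratCastHom.ne_iff]

lemma exists_pontryaginDual_eqOn_one_apply_ne_one {G : Type*} [AddCommGroup G]
    [TopologicalSpace G] [IsTopologicalAddGroup G] {N : AddSubgroup G} (hN : IsOpen (N : Set G))
    {x : G} (hx : x ∉ N) :
    ∃ χ : PontryaginDual (Multiplicative G),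
      EqOn χ 1 (Multiplicative.ofAdd '' N) ∧ χ (Multiplicative.ofAdd x) ≠ 1 := by
  have := QuotientAddGroup.discreteTopology hN
  obtain ⟨ψ, hψ⟩ := exists_addChar_circle_apply_ne_one (mt (QuotientAddGroup.eq_zero_iff x).1 hx)
  refine ⟨⟨(ψ.compAddMonoidHom (QuotientAddGroup.mk' N)).toMonoidHom, ?_⟩, ?_, hψ⟩
  · exact (continuous_of_discreteTopology (f := ψ)).comp
      (QuotientAddGroup.continuous_mk.comp continuous_toAdd)
  · rintro _ ⟨n, hn, rfl⟩
    change ψ n = 1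
    rw [(QuotientAddGroup.eq_zero_iff n).2 hn, AddChar.map_zero_eq_one]

namespace ContinuousMonoidHom

variable {A B : Type*} [Monoid A] [TopologicalSpace A] [Monoid B] [TopologicalSpace B]

lemma setOf_mapsTo_mem_nhds_one {K : Set A} (hK : IsCompact K) {U : Set B} (hU : IsOpen U)
    (h1 : (1 : B) ∈ U) : {χ : A →ₜ* B | MapsTo χ K U} ∈ 𝓝 1 :=
  ((ContinuousMap.isOpen_setOfPred_mapsTo hK hU).preimage
    (isInducing_toContinuousMap A B).continuous).mem_nhds fun _ _ ↦ h1

lemma exists_isCompact_forall_eqOn_one_mem {V : Set (A →ₜ* B)} (hV : V ∈ 𝓝 1) :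
    ∃ K : Set A, IsCompact K ∧ ∀ χ : A →ₜ* B, EqOn χ 1 K → χ ∈ V := by
  rw [(isInducing_toContinuousMap A B).nhds_eq_comap] at hV
  obtain ⟨O, hO, hOV⟩ := hV
  obtain ⟨⟨K, U⟩, ⟨hK, hU⟩, hKU⟩ :=
    ((𝓝 (1 : B)).basis_sets.nhds_continuousMapConst (X := A)).mem_iff.1 hO
  refine ⟨K, hK, fun χ hχ ↦ hOV (hKU fun x hx ↦ ?_)⟩
  simpa [hχ hx] using mem_of_mem_nhds hU

end ContinuousMonoidHom

section CharPow

variable {R M : Type*} [Semiring R] [AddCommGroup M] [Module R M] [TopologicalSpace M]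
  [ContinuousConstSMul R M]

lemma charPow_apply (r : R) (χ : PontryaginDual (Multiplicative M)) (m : M) :
    charPow r χ (Multiplicative.ofAdd m) = χ (Multiplicative.ofAdd (r • m)) :=
  rfl

lemma eq_one_of_forall_charPow_mapsTo_centeredArc {K : Set M} (hK : span R K = ⊤)
    {χ : PontryaginDual (Multiplicative M)}
    (hχ : ∀ r : R, MapsTo (charPow r χ) (Multiplicative.ofAdd '' K) (Circle.centeredArc (π / 2))) :
    χ = 1 := by
  have hKχ : ∀ k ∈ K, ∀ r : R, χ (Multiplicative.ofAdd (r • k)) = 1 := fun k hk r ↦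
    Circle.eq_one_of_forall_pow_mem_centeredArc_pi_div_two fun n _ ↦ by
      have := hχ (n • r) ⟨k, hk, rfl⟩
      rwa [charPow_apply, smul_assoc, ofAdd_nsmul, map_pow] at this
  have hspanχ : ∀ m ∈ span R K, ∀ r : R, χ (Multiplicative.ofAdd (r • m)) = 1 := by
    intro m hm
    induction hm using Submodule.span_induction with
    | mem k hk => exact hKχ k hk
    | zero => simp
    | add x y _ _ hx hy => intro r; simp [smul_add, hx r, hy r]
    | smul s x _ hx => intro r; simpa [smul_smul] using hx (r * s)
  refine PontryaginDual.ext fun m ↦ ?_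
  simpa using hspanχ m.toAdd (hK ▸ mem_top) 1

lemma exists_mem_nhds_forall_charPow_mem_eq_one
    (h : ∃ K : Set M, IsCompact K ∧ span R K = ⊤) :
    ∃ V ∈ 𝓝 (1 : PontryaginDual (Multiplicative M)),
      ∀ χ : PontryaginDual (Multiplicative M), (∀ r : R, charPow r χ ∈ V) → χ = 1 := by
  obtain ⟨K, hK, hspan⟩ := h
  exact ⟨_, ContinuousMonoidHom.setOf_mapsTo_mem_nhds_one (hK.image continuous_ofAdd)
    (Circle.isOpen_centeredArc _) (Circle.one_mem_centeredArc (by positivity)),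
    fun χ hχ ↦ eq_one_of_forall_charPow_mapsTo_centeredArc hspan hχ⟩

end CharPow

section

variable {R M : Type*} [Ring R] [AddCommGroup M] [Module R M] [TopologicalSpace M]
  [IsTopologicalAddGroup M] [ContinuousConstSMul R M] [LocallyCompactSpace M]

lemma exists_isCompact_span_eq_top
    (h : ∃ V ∈ 𝓝 (1 : PontryaginDual (Multiplicative M)),
      ∀ χ : PontryaginDual (Multiplicative M), (∀ r : R, charPow r χ ∈ V) → χ = 1) :
    ∃ K : Set M, IsCompact K ∧ span R K = ⊤ := by
  obtain ⟨V, hV, hV1⟩ := h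
  obtain ⟨K, hK, hKV⟩ := ContinuousMonoidHom.exists_isCompact_forall_eqOn_one_mem hV
  obtain ⟨U, hU, hU0⟩ := exists_compact_mem_nhds (0 : M)
  set N := span R (Multiplicative.toAdd '' K ∪ U)
  have hN : IsOpen (N : Set M) := N.toAddSubgroup.isOpen_of_mem_nhds
    (Filter.mem_of_superset hU0 (subset_union_right.trans subset_span))
  refine ⟨_, (hK.image continuous_toAdd).union hU, eq_top_iff'.2 fun x ↦ by_contra fun hx ↦ ?_⟩
  obtain ⟨χ, hχN, hχx⟩ := exists_pontryaginDual_eqOn_one_apply_ne_one (N := N.toAddSubgroup) hN hx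
  refine hχx ?_
  rw [hV1 χ fun r ↦ hKV _ fun y hy ↦ hχN ⟨r • y.toAdd, ?_, rfl⟩]
  · rfl
  · exact N.smul_mem r (subset_span (Or.inl ⟨y, hy, rfl⟩))

end

theorem stmt_18_general (P : Set Nat.Primes) (M : Type*) [AddCommGroup M] [Module (ZS P) M]
    [TopologicalSpace M] [IsTopologicalAddGroup M] [ContinuousSMul (ZS P) M]
    [LocallyCompactSpace M] :
    (∃ K : Set M, IsCompact K ∧ Submodule.span (ZS P) K = ⊤) ↔
      (∃ V ∈ nhds (1 : PontryaginDual (Multiplicative M)),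
        ∀ χ : PontryaginDual (Multiplicative M), (∀ r : ZS P, charPow r χ ∈ V) → χ = 1) :=
  ⟨exists_mem_nhds_forall_charPow_mem_eq_one, exists_isCompact_span_eq_top⟩

/-- A locally compact Hausdorff topological module `M` over the discrete ring
`ℤ[S⁻¹]` is compactly generated if and only if its Pontryagin dual has no small submodules:
some compact subset of `M` spans `M` over `ℤ[S⁻¹]` iff there is a neighbourhood `V` of the
trivial character such that the only character `χ` with `χ^r ∈ V` for all `r ∈ ℤ[S⁻¹]` is
trivial. -/
theorem stmt_18 (P : Set Nat.Primes) (M : Type*) [AddCommGroup M] [Module (ZS P) M]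
    [TopologicalSpace M] [IsTopologicalAddGroup M] [ContinuousSMul (ZS P) M]
    [LocallyCompactSpace M] [T2Space M] :
    (∃ K : Set M, IsCompact K ∧ Submodule.span (ZS P) K = ⊤) ↔
      (∃ V ∈ nhds (1 : PontryaginDual (Multiplicative M)),
        ∀ χ : PontryaginDual (Multiplicative M), (∀ r : ZS P, charPow r χ ∈ V) → χ = 1) :=
  stmt_18_general P M
end
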